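/- Let X and U be nonempty sets, let f : X → U → X define a discrete-time system that is T_d-controllable, let κ be a strictly positive definite kernel on X × U, fix anchor points z̃_1,…,z̃_M ∈ X × U, an initial state x₀ ∈ X, and N ≥ M·(T_d + 1). For each input sequence u : {0,…,N−1} → U let S(u) = {(x(j), u(j)) : 0 ≤ j ≤ N−1} be the generated dataset and V(S(u)) = (1/M)·Σ_{i=1}^{M} Var(z̃_i ; S(u)) the average GP posterior variance at the anchors. Then the infimum of V(S(u)) over all input sequences u : {0,…,N−1} → U equals 0, and it is attained: there exists an input sequence u with V(S(u)) = 0. -/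

import Mathlib

/-!
The posterior variance vanishes at any point of the dataset, since the kernel vector is then a
column of the Gram matrix, and it is always nonnegative, being the Schur complement of a positive
definite Gram matrix. By controllability a single input sequence can visit a prescribed
state-input pair `(x, u)` within `Td + 1` steps (steer to `x` in at most `Td` steps, then apply
`u`), so `M * (Td + 1)` steps put every anchor into the dataset, where the average variance
attains its lower bound `0`.
-/

open Matrix
open scoped Classical

/-- A strictly positive definite kernel: every Gram matrix built from pairwise-distinct
points is positive definite. -/
def IsStrictlyPDKernel {Z : Type*} (κ : Z → Z → ℝ) : Prop :=
  ∀ (n : ℕ) (z : Fin n → Z), Function.Injective z →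
    (Matrix.of fun i j => κ (z i) (z j)).PosDef

/-- GP posterior variance at a query point `zq`, given the (pairwise-distinct) data points
in the finite set `S`: `κ(z̃,z̃) − k K⁻¹ kᵀ` with `K` the Gram matrix of `S` and `k` the
vector of kernel evaluations between `zq` and the points of `S`. -/
noncomputable def postVar {Z : Type*} (κ : Z → Z → ℝ) (S : Finset Z) (zq : Z) : ℝ :=
  κ zq zq -
    (fun i : S => κ zq (i : Z)) ⬝ᵥ
      ((Matrix.of fun i j : S => κ (i : Z) (j : Z))⁻¹ *ᵥ fun i : S => κ zq (i : Z))

/-- Trajectory of the discrete-time system `x(k+1) = f(x(k), u(k))` starting at `x0`. -/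
def traj {X U : Type*} (f : X → U → X) (x0 : X) (u : ℕ → U) : ℕ → X
  | 0 => x0
  | k + 1 => f (traj f x0 u k) (u k)

/-- `Td`-controllability: any state can be driven to any other state in at most `Td`
(and at least one) steps by a suitable input sequence. -/
def Controllable {X U : Type*} (f : X → U → X) (Td : ℕ) : Prop :=
  ∀ x1 x2 : X, ∃ T : ℕ, 1 ≤ T ∧ T ≤ Td ∧ ∃ u : ℕ → U, traj f x1 u T = x2

/-- Generated dataset: the set of joint input-state points `{(x(j), u(j)) : 0 ≤ j ≤ N−1}`
of the trajectory with `x(0) = x0`. -/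
noncomputable def dataset {X U : Type*} (f : X → U → X) (x0 : X) (u : ℕ → U) (N : ℕ) :
    Finset (X × U) :=
  Finset.image (fun j => (traj f x0 u j, u j)) (Finset.range N)
namespace IsStrictlyPDKernel

variable {Z : Type*} {κ : Z → Z → ℝ}

theorem posDef_gram (hκ : IsStrictlyPDKernel κ) {ι : Type*} [Fintype ι] {g : ι → Z}
    (hg : Function.Injective g) : (Matrix.of fun i j => κ (g i) (g j)).PosDef := by
  let e := Fintype.equivFin ι
  convert (hκ _ (g ∘ e.symm) (hg.comp e.symm.injective)).submatrix e.injective using 1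
  ext i j
  simp

theorem symm (hκ : IsStrictlyPDKernel κ) (z w : Z) : κ z w = κ w z := by
  by_cases h : z = w
  · rw [h]
  · have hinj : Function.Injective ![z, w] := by
      intro i j hij
      fin_cases i <;> fin_cases j <;> simp_all [eq_comm]
    simpa using ((hκ 2 ![z, w] hinj).isHermitian.apply 0 1).symm

theorem postVar_eq_zero_of_mem (hκ : IsStrictlyPDKernel κ) {S : Finset Z} {z : Z}
    (hz : z ∈ S) : postVar κ S z = 0 := by
  set K : Matrix S S ℝ := Matrix.of fun i j : S => κ i j
  have hK : K.PosDef := hκ.posDef_gram Subtype.coe_injective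
  have hk : (fun i : S => κ z i) = K *ᵥ Pi.single ⟨z, hz⟩ 1 := by
    ext i
    simp [Matrix.mulVec_single, K, hκ.symm z]
  rw [postVar]
  change κ z z - _ ⬝ᵥ (K⁻¹ *ᵥ _) = 0
  rw [hk, mulVec_mulVec, nonsing_inv_mul K (isUnit_iff_ne_zero.2 hK.det_pos.ne'), one_mulVec,
    dotProduct_single]
  simp [Matrix.mulVec_single, K]

theorem postVar_nonneg (hκ : IsStrictlyPDKernel κ) (S : Finset Z) (z : Z) :
    0 ≤ postVar κ S z := by
  by_cases hz : z ∈ S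
  · exact (hκ.postVar_eq_zero_of_mem hz).ge
  set K : Matrix S S ℝ := Matrix.of fun i j : S => κ i j
  have hK : K.PosDef := hκ.posDef_gram Subtype.coe_injective
  have : Invertible K := hK.isUnit.invertible
  set B : Matrix Unit S ℝ := Matrix.of fun _ j => κ z j
  set g : Unit ⊕ S → Z := Sum.elim (fun _ => z) (↑)
  have hg : Function.Injective g :=
    Function.injective_of_subsingleton _ |>.sumElim Subtype.coe_injective
      fun _ j h => hz (h ▸ j.2)
  have hblocks : (Matrix.of fun i j => κ (g i) (g j)) =
      Matrix.fromBlocks (Matrix.of fun _ _ => κ z z) B Bᴴ K := by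
    ext (_ | i) (_ | j) <;> simp [g, B, K, hκ.symm z]
  -- `postVar κ S z` is the Schur complement of `K` in the Gram matrix of `{z} ∪ S`
  have hschur :=
    (Matrix.PosDef.fromBlocks₂₂ _ B hK).1 (hblocks ▸ (hκ.posDef_gram hg).posSemidef)
  have hentry : (Matrix.of (fun _ _ => κ z z) - B * K⁻¹ * Bᴴ : Matrix Unit Unit ℝ) () () =
      postVar κ S z := by
    rw [Matrix.mul_assoc]
    simp [postVar, B, K, Matrix.mul_apply, Matrix.mulVec, dotProduct, Finset.mul_sum]
  exact hentry ▸ hschur.diag_nonneg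

end IsStrictlyPDKernel

section Trajectory

variable {X U : Type*}

def appendAt (T : ℕ) (u v : ℕ → U) : ℕ → U :=
  fun j => if j < T then u j else v (j - T)

theorem appendAt_of_lt {T j : ℕ} (u v : ℕ → U) (h : j < T) : appendAt T u v j = u j :=
  if_pos h

theorem appendAt_add (T k : ℕ) (u v : ℕ → U) : appendAt T u v (T + k) = v k := by
  simp [appendAt]

variable (f : X → U → X)

theorem traj_appendAt_of_le (x0 : X) (u v : ℕ → U) {T k : ℕ} (h : k ≤ T) :
    traj f x0 (appendAt T u v) k = traj f x0 u k := by
  induction k with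
  | zero => rfl
  | succ k ih => rw [traj, traj, ih (by omega), appendAt_of_lt u v (by omega)]

theorem traj_appendAt_add (x0 : X) (u v : ℕ → U) (T k : ℕ) :
    traj f x0 (appendAt T u v) (T + k) = traj f (traj f x0 u T) v k := by
  induction k with
  | zero => exact traj_appendAt_of_le f x0 u v le_rfl
  | succ k ih => rw [← Nat.add_assoc, traj, traj, ih, appendAt_add]

theorem mem_dataset {x0 : X} {u : ℕ → U} {N : ℕ} {z : X × U} :
    z ∈ dataset f x0 u N ↔ ∃ j < N, (traj f x0 u j, u j) = z := by
  simp [dataset]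

theorem dataset_mono (x0 : X) (u : ℕ → U) {N N' : ℕ} (h : N ≤ N') :
    dataset f x0 u N ⊆ dataset f x0 u N' :=
  Finset.image_subset_image (Finset.range_subset_range.2 h)

variable {f} {Td : ℕ}

theorem Controllable.exists_traj_eq (hctrl : Controllable f Td) (x0 : X) (z : X × U) :
    ∃ T ≤ Td, ∃ w : ℕ → U, (traj f x0 w T, w T) = z := by
  obtain ⟨T, -, hT, u, hu⟩ := hctrl x0 z.1
  refine ⟨T, hT, appendAt T u fun _ => z.2, ?_⟩
  rw [traj_appendAt_of_le f x0 _ _ le_rfl, hu]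
  simp [appendAt]

theorem Controllable.exists_subset_dataset [Nonempty U] (hctrl : Controllable f Td)
    (s : Finset (X × U)) (x0 : X) : ∃ u, s ⊆ dataset f x0 u (s.card * (Td + 1)) := by
  induction s using Finset.induction_on generalizing x0 with
  | empty => exact ⟨fun _ => Classical.arbitrary U, Finset.empty_subset _⟩
  | insert z s hz ih =>
    obtain ⟨T, hT, w, hw⟩ := hctrl.exists_traj_eq x0 z
    obtain ⟨v, hv⟩ := ih (traj f x0 w (T + 1))
    refine ⟨appendAt (T + 1) w v, Finset.insert_subset_iff.2 ⟨?_, fun z' hz' => ?_⟩⟩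
    · refine (mem_dataset f).2 ⟨T, ?_, ?_⟩
      · rw [Finset.card_insert_of_notMem hz]
        nlinarith
      · rw [traj_appendAt_of_le f x0 _ _ T.le_succ, appendAt_of_lt _ _ T.lt_succ_self, hw]
    · obtain ⟨j, hj, rfl⟩ := (mem_dataset f).1 (hv hz')
      refine (mem_dataset f).2 ⟨T + 1 + j, ?_, ?_⟩
      · rw [Finset.card_insert_of_notMem hz]
        nlinarith
      · rw [traj_appendAt_add, appendAt_add]

end Trajectory

theorem statement10_general {X U : Type*} [Nonempty U]
    (f : X → U → X) (Td : ℕ) (hctrl : Controllable f Td)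
    (κ : X × U → X × U → ℝ) (hκ : IsStrictlyPDKernel κ)
    {M : ℕ} (anchors : Fin M → X × U)
    (x0 : X) (N : ℕ) (hN : M * (Td + 1) ≤ N) :
    sInf (Set.range fun u : ℕ → U =>
        (1 / (M : ℝ)) * ∑ i, postVar κ (dataset f x0 u N) (anchors i)) = 0 ∧
      ∃ u : ℕ → U,
        (1 / (M : ℝ)) * ∑ i, postVar κ (dataset f x0 u N) (anchors i) = 0 := by
  obtain ⟨u, hu⟩ := hctrl.exists_subset_dataset (Finset.univ.image anchors) x0
  have hcard : (Finset.univ.image anchors).card * (Td + 1) ≤ N :=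
    le_trans (Nat.mul_le_mul_right _ (Finset.card_image_le.trans (by simp))) hN
  have hmem (i : Fin M) : anchors i ∈ dataset f x0 u N :=
    dataset_mono f x0 u hcard (hu (Finset.mem_image_of_mem _ (Finset.mem_univ i)))
  have hzero : (1 / (M : ℝ)) * ∑ i, postVar κ (dataset f x0 u N) (anchors i) = 0 := by
    simp [hκ.postVar_eq_zero_of_mem (hmem _)]
  have hleast : IsLeast (Set.range fun u : ℕ → U =>
      (1 / (M : ℝ)) * ∑ i, postVar κ (dataset f x0 u N) (anchors i)) 0 :=
    ⟨⟨u, hzero⟩, Set.forall_mem_range.2 fun v =>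
      mul_nonneg (by positivity) (Finset.sum_nonneg fun i _ => hκ.postVar_nonneg _ _)⟩
  exact ⟨hleast.csInf_eq, u, hzero⟩

/-- For a `Td`-controllable system, a strictly positive definite kernel,
`M` anchor points, an initial state and `N ≥ M·(Td+1)`, the infimum over all input
sequences of the average GP posterior variance at the anchors equals `0`, and it is
attained by some input sequence. -/
theorem statement10 {X U : Type*} [Nonempty X] [Nonempty U]
    (f : X → U → X) (Td : ℕ) (hTd : 0 < Td) (hctrl : Controllable f Td)
    (κ : X × U → X × U → ℝ) (hκ : IsStrictlyPDKernel κ)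
    {M : ℕ} (hM : 0 < M) (anchors : Fin M → X × U)
    (x0 : X) (N : ℕ) (hN : M * (Td + 1) ≤ N) :
    sInf (Set.range fun u : ℕ → U =>
        (1 / (M : ℝ)) * ∑ i, postVar κ (dataset f x0 u N) (anchors i)) = 0 ∧
      ∃ u : ℕ → U,
        (1 / (M : ℝ)) * ∑ i, postVar κ (dataset f x0 u N) (anchors i) = 0 :=
  statement10_general f Td hctrl κ hκ anchors x0 N hN
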